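/- arXiv:1807.08797 — 3 statements merged into one kernel-verified Lean document; each statement's English description precedes it below -/
import Mathlib

section
/- Let w ∈ W_n be a signed permutation and let p, q be any integers. Then the corner inequalities hold at (p,q) — namely w(-p) > q-1 ≥ w(-p+1) and w⁻¹(q-1) > -p ≥ w⁻¹(q) — if and only if they hold at the reflected pair (-p+1, -q+1); moreover, for all integers p, q, the rank function satisfies r_w(-p+1, -q+1) = r_w(p,q) + p + q - 1. -/
/-! ### Signed permutations, corners, patterns, and theta-triples -/

/-- `w` is a signed permutation: `w (-i) = -(w i)` for all `i`. -/
def IsSignedPerm (w : Equiv.Perm ℤ) : Prop :=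
  ∀ i : ℤ, w (-i) = -(w i)

/-- `w` belongs to the hyperoctahedral group `W n`: `w m = m` for all `m > n`. -/
def MemW (w : Equiv.Perm ℤ) (n : ℕ) : Prop :=
  ∀ m : ℤ, (n : ℤ) < m → w m = m

/-- The rank function `r_w(p, q) = #{i ∈ ℤ : i ≥ p and w i ≤ -q}`. -/
noncomputable def rankFn (w : Equiv.Perm ℤ) (p q : ℤ) : ℕ :=
  Set.ncard {i : ℤ | p ≤ i ∧ w i ≤ -q}

/-- `(p, q)` is a corner position of `w`: `p ≥ 1`,
`w(-p) > q-1 ≥ w(-p+1)` and `w⁻¹(q-1) > -p ≥ w⁻¹(q)`,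
excluding the pairs with `p = 1` and `q < 0`. -/
def IsCornerPos (w : Equiv.Perm ℤ) (p q : ℤ) : Prop :=
  1 ≤ p ∧ (q - 1 < w (-p) ∧ w (-p + 1) ≤ q - 1) ∧
    (-p < w⁻¹ (q - 1) ∧ w⁻¹ q ≤ -p) ∧ ¬(p = 1 ∧ q < 0)

/-- `(p, q)` belongs to the NE path `Ne(w)`: it is a corner position which is
minimal for the strict partial order `(p,q) < (p',q') ↔ p > p' ∧ q < q'`. -/
def InNePath (w : Equiv.Perm ℤ) (p q : ℤ) : Prop :=
  IsCornerPos w p q ∧ ∀ p' q' : ℤ, IsCornerPos w p' q' → ¬(p < p' ∧ q' < q)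

/-- `(p, q)` is an unessential corner position of `w`, i.e. `(p,q) ∈ U(w)`. -/
def IsUnessential (w : Equiv.Perm ℤ) (p q : ℤ) : Prop :=
  IsCornerPos w p q ∧
    ∃ p₁ q₁ p₂ q₂ p₃ q₃ : ℤ,
      InNePath w p₁ q₁ ∧ InNePath w p₂ q₂ ∧ InNePath w p₃ q₃ ∧
      p₁ = p ∧ q₁ < q ∧ q < 0 ∧ 0 < p₂ ∧ q₂ = -q + 1 ∧ p < p₃ ∧ q₃ < q

/-- `w` contains the signed pattern `π`. -/
def ContainsPattern (w : Equiv.Perm ℤ) (π : List ℤ) : Prop :=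
  ∃ idx : Fin π.length → ℤ,
    (∀ j, 1 ≤ idx j) ∧ (∀ j l, j < l → idx j < idx l) ∧
    (∀ j, 0 < π.get j ↔ 0 < w (idx j)) ∧
    (∀ j l, |π.get j| < |π.get l| ↔ |w (idx j)| < |w (idx l)|)

/-- `w` avoids the signed pattern `π`. -/
def AvoidsPattern (w : Equiv.Perm ℤ) (π : List ℤ) : Prop :=
  ¬ ContainsPattern w π

/-- The thirteen signed patterns of the main theorem. -/
def thetaPatterns : List (List ℤ) :=
  [[-1, 3, 2], [-2, 3, 1], [-3, 2, 1], [-3, 2, -1],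
   [2, 1, 4, 3], [2, -3, 4, -1], [-2, -3, 4, -1],
   [3, -4, 1, -2], [3, -4, -1, -2], [-3, -4, 1, -2], [-3, -4, -1, -2],
   [-4, 1, -2, 3], [-4, -1, -2, 3]]

/-- The index `a` with `q (a-1) > 0 > q a`, i.e. one plus the number of positive `q i`. -/
def thetaA (s : ℕ) (q : ℕ → ℤ) : ℕ :=
  1 + ((Finset.Icc 1 s).filter (fun i => 0 < q i)).card

/-- The index `R i`, the unique index with `q (R i) > -q i > q (R i + 1)`. -/
def thetaR (s : ℕ) (q : ℕ → ℤ) (i : ℕ) : ℕ :=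
  ((Finset.Icc 1 s).filter (fun j => -q i < q j)).card

/-- The index `L i`: the largest `j` with `R i + 1 ≤ j ≤ a - 1` and
`k j - k (R i + 1) ≥ q (R i + 1) - q j`. -/
def thetaL (s : ℕ) (k q : ℕ → ℤ) (i : ℕ) : ℕ :=
  ((Finset.Icc (thetaR s q i + 1) (thetaA s q - 1)).filter
    (fun j => q (thetaR s q i + 1) - q j ≤ k j - k (thetaR s q i + 1))).sup id

/-- A theta-triple `τ = (k, p, q)`.  The tuples are recorded as functions
`ℕ → ℤ`, with only the values at indices `1, …, s` relevant, and the convention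
`k 0 = 0`. -/
structure ThetaTriple where
  s : ℕ
  k : ℕ → ℤ
  p : ℕ → ℤ
  q : ℕ → ℤ
  hk0 : k 0 = 0
  hkmono : ∀ i, i < s → k i < k (i + 1)
  hpmono : ∀ i, 1 ≤ i → i < s → p (i + 1) ≤ p i
  hppos : 1 ≤ s → 0 < p s
  hqmono : ∀ i, 1 ≤ i → i < s → q (i + 1) ≤ q i
  A1 : ∀ i, 1 ≤ i → i ≤ s → q i ≠ 0
  A2 : ∀ i j, 1 ≤ i → i ≤ s → 1 ≤ j → j ≤ s → i ≠ j → q i ≠ -q j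
  A3 : 1 ≤ s → q s < 0 → 1 < p s
  B1 : ∀ i, 1 ≤ i → i + 1 < thetaA s q →
    k (i + 1) - k i < (p i - p (i + 1)) + (q i - q (i + 1))
  B2 : ∀ i, thetaA s q ≤ i → i < s →
    (k (i + 1) - k i) + (k (thetaR s q i) - k (thetaR s q (i + 1))) <
      (p i - p (i + 1)) + (q i - q (i + 1))
  B3 : thetaA s q ≤ s → k (thetaR s q s) + 1 < p s + q s + k s
  C1 : ∀ i, thetaA s q ≤ i → i ≤ s → k i - k (thetaR s q i) ≤ -q i
  C2 : ∀ i, thetaA s q ≤ i → i ≤ s → thetaR s q i + 1 < thetaA s q →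
    q (thetaL s k q i) + k (thetaL s k q i) - k (thetaR s q i) ≤ -q i

/-- The largest integer `x ≤ b` whose absolute value is not in `S`. -/
noncomputable def pickVal (S : Finset ℤ) (b : ℤ) : ℤ :=
  WithBot.unbotD 0 (((Finset.Icc (b - 2 * (S.card : ℤ) - 1) b).filter (fun x => |x| ∉ S)).max)

/-- The greedy decreasing list `x₁ > x₂ > ⋯ > x_m` of values: `x₁` is the largest
integer `≤ b` with unused absolute value, and each further `x` is the largest
integer below the previous one with fresh absolute value. -/
noncomputable def pickVals (S : Finset ℤ) (b : ℤ) : ℕ → List ℤ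
  | 0 => []
  | m + 1 =>
      let x := pickVal S b
      x :: pickVals (insert |x| S) (x - 1) m

/-- The least vacant position `≥ p` (positions in `F` are filled). -/
noncomputable def nextVacant (F : Finset ℤ) (p : ℤ) : ℤ :=
  WithTop.untopD 0 (((Finset.Icc p (p + (F.card : ℤ))).filter (fun x => x ∉ F)).min)

/-- The first `m` vacant positions `≥ p`, in increasing order. -/
noncomputable def pickPositions (F : Finset ℤ) (p : ℤ) : ℕ → List ℤ
  | 0 => []
  | m + 1 =>
      let x := nextVacant F p
      x :: pickPositions (insert x F) (x + 1) m

/-- One step of the construction algorithm: `st` is the list of placements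
`(position, value)` made so far, `pi` is the starting position, `b = -q i`,
and `m = k i - k (i-1)` is the number of values to place.  The `m` greedily
chosen values are placed, in increasing order, at the first `m` vacant
positions `≥ pi`. -/
noncomputable def stepPlace (st : List (ℤ × ℤ)) (pi b : ℤ) (m : ℕ) : List (ℤ × ℤ) :=
  let F : Finset ℤ := (st.map Prod.fst).toFinset
  let S : Finset ℤ := (st.map (fun pv => |pv.2|)).toFinset
  (st ++ (pickPositions F pi m).zip (pickVals S b m).reverse)

/-- Steps `1, …, s` of the construction algorithm for a theta-triple. -/
noncomputable def ThetaTriple.run (τ : ThetaTriple) : List (ℤ × ℤ) :=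
  (List.range τ.s).foldl
    (fun st i =>
      stepPlace st (τ.p (i + 1)) (-(τ.q (i + 1))) ((τ.k (i + 1) - τ.k i).toNat))
    []

/-- A sufficiently large `n` for the construction of `w(τ)`. -/
def ThetaTriple.bigN (τ : ThetaTriple) : ℤ :=
  |τ.p 1| + |τ.q 1| + |τ.q τ.s| + 4 * |τ.k τ.s| + 4

/-- The final step: fill every remaining vacant position among `1, …, n`,
in increasing order, with the smallest unused positive integers. -/
noncomputable def finalStep (st : List (ℤ × ℤ)) (n : ℤ) : List (ℤ × ℤ) :=
  let F : Finset ℤ := (st.map Prod.fst).toFinset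
  let S : Finset ℤ := (st.map (fun pv => |pv.2|)).toFinset
  let P : List ℤ := ((Finset.Icc 1 n).filter (fun x => x ∉ F)).sort (· ≤ ·)
  let V : List ℤ := ((Finset.Icc 1 (n + (S.card : ℤ))).filter (fun x => x ∉ S)).sort (· ≤ ·)
  st ++ P.zip V

/-- The value of `w(τ)` at a positive position `i`. -/
noncomputable def ThetaTriple.posVal (τ : ThetaTriple) (i : ℤ) : ℤ :=
  (((finalStep τ.run τ.bigN).find? (fun pv => pv.1 == i)).getD (i, i)).2

/-- The signed permutation `w(τ)` associated to a theta-triple, as a function. -/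
noncomputable def ThetaTriple.wfun (τ : ThetaTriple) : ℤ → ℤ := fun i =>
  if 0 < i then τ.posVal i else if i < 0 then -(τ.posVal (-i)) else 0

/-- `w` is theta-vexillary: `w = w(τ)` for some theta-triple `τ`. -/
def IsThetaVexillary (w : Equiv.Perm ℤ) : Prop :=
  ∃ τ : ThetaTriple, ∀ i : ℤ, w i = τ.wfun i

/-- `(p, q)` is an optional corner position of `w = w(τ)`. -/
def IsOptional (τ : ThetaTriple) (w : Equiv.Perm ℤ) (p q : ℤ) : Prop :=
  IsCornerPos w p q ∧
    (¬ ∃ i : ℕ, 1 ≤ i ∧ i ≤ τ.s ∧ p = τ.p i ∧ q = τ.q i) ∧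
    ∃ i j : ℕ, thetaA τ.s τ.q ≤ i ∧ i ≤ τ.s ∧ 1 ≤ j ∧ j < thetaA τ.s τ.q ∧
      p = τ.p i ∧ q = -τ.q j + 1 ∧ (1 < i → q ≤ τ.q (i - 1)) ∧ τ.q i < q

/-- symmetry of corners and ranks.  The corner inequalities
hold at `(p, q)` iff they hold at the reflected pair `(-p+1, -q+1)`, and the
rank function satisfies `r_w(-p+1, -q+1) = r_w(p, q) + p + q - 1`. -/
theorem corner_symmetry_and_rank_reflection
    (w : Equiv.Perm ℤ) (hsp : IsSignedPerm w) (n : ℕ) (hW : MemW w n)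
    (p q : ℤ) :
    (((q - 1 < w (-p) ∧ w (-p + 1) ≤ q - 1) ∧
        (-p < w⁻¹ (q - 1) ∧ w⁻¹ q ≤ -p)) ↔
      ((-q < w (p - 1) ∧ w p ≤ -q) ∧
        (p - 1 < w⁻¹ (-q) ∧ w⁻¹ (-q + 1) ≤ p - 1))) ∧
    (rankFn w (-p + 1) (-q + 1) : ℤ) = (rankFn w p q : ℤ) + p + q - 1 := by
  have hsp' : ∀ j : ℤ, w⁻¹ (-j) = -(w⁻¹ j) := by
    intro j
    have h : w (-(w⁻¹ j)) = -j := by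
      rw [hsp (w⁻¹ j), (Equiv.Perm.eq_inv_iff_eq (f := w) (x := w⁻¹ j) (y := j)).mp rfl]
    calc w⁻¹ (-j) = w⁻¹ (w (-(w⁻¹ j))) := by rw [h]
      _ = -(w⁻¹ j) := (Equiv.Perm.inv_eq_iff_eq (f := w) (x := w (-(w⁻¹ j))) (y := -(w⁻¹ j))).mpr rfl
  have hfix : ∀ m : ℤ, ((n:ℤ) < m ∨ m < -(n:ℤ)) → w m = m := by
    intro m hm
    rcases hm with h | h
    · exact hW m h
    · have h2 := hsp (-m)
      rw [neg_neg] at h2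
      rw [h2, hW (-m) (by omega), neg_neg]
  constructor
  · have h1 : w (-p) = -(w p) := hsp p
    have h2 : w (-p + 1) = -(w (p - 1)) := by
      rw [show (-p + 1 : ℤ) = -(p - 1) by ring, hsp (p - 1)]
    have h3 : w⁻¹ (-q + 1) = -(w⁻¹ (q - 1)) := by
      rw [show (-q + 1 : ℤ) = -(q - 1) by ring, hsp' (q - 1)]
    have h4 : w⁻¹ (-q) = -(w⁻¹ q) := hsp' q
    rw [h1, h2, h3, h4]
    generalize w p = a
    generalize w (p - 1) = b
    generalize w⁻¹ (q - 1) = c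
    generalize w⁻¹ q = d
    omega
  · set N : ℤ := (n : ℤ) + p.natAbs + q.natAbs + 1 with hNdef
    have hnN : (n : ℤ) ≤ N := by omega
    have hb : ∀ i : ℤ, -N ≤ i → i ≤ N → -N ≤ w i ∧ w i ≤ N := by
      intro i h1 h2
      by_cases h : (n:ℤ) < w i ∨ w i < -(n:ℤ)
      · have h3 := hfix (w i) h
        have h4 : w i = i := by
          have h5 := congrArg (⇑w⁻¹) h3
          simpa using h5
        rw [h4]; exact ⟨h1, h2⟩
      · push_neg at h
        constructor <;> linarith [h.1, h.2]
    have hb' : ∀ i : ℤ, -N ≤ i → i ≤ N → -N ≤ w⁻¹ i ∧ w⁻¹ i ≤ N := by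
      intro i h1 h2
      by_cases h : (n:ℤ) < w⁻¹ i ∨ w⁻¹ i < -(n:ℤ)
      · have h3 := hfix (w⁻¹ i) h
        rw [(Equiv.Perm.eq_inv_iff_eq (f := w) (x := w⁻¹ i) (y := i)).mp rfl] at h3
        rw [← h3]; exact ⟨h1, h2⟩
      · push_neg at h
        constructor <;> linarith [h.1, h.2]
    have hrank : ∀ a b : ℤ, -b ≤ N →
        (rankFn w a b : ℤ) = (((Finset.Icc a N).filter fun i => w i ≤ -b).card : ℤ) := by
      intro a b hbN
      have hset : {i : ℤ | a ≤ i ∧ w i ≤ -b}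
          = (((Finset.Icc a N).filter fun i => w i ≤ -b) : Set ℤ) := by
        ext i
        simp only [Set.mem_setOf_eq, Finset.coe_filter, Finset.mem_Icc]
        constructor
        · rintro ⟨hh1, hh2⟩
          refine ⟨⟨hh1, ?_⟩, hh2⟩
          by_contra hc
          push_neg at hc
          have h3 := hfix i (Or.inl (by linarith))
          linarith [h3 ▸ hh2]
        · rintro ⟨⟨hh1, _⟩, hh2⟩
          exact ⟨hh1, hh2⟩
      rw [rankFn, hset, Set.ncard_coe_finset]
    have e1 : (rankFn w p q : ℤ)
        = (((Finset.Icc p N).filter fun i => w i ≤ -q).card : ℤ) := hrank p q (by omega)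
    have e2 : (rankFn w (-p + 1) (-q + 1) : ℤ)
        = (((Finset.Icc (-p + 1) N).filter fun i => w i ≤ q - 1).card : ℤ) := by
      have h := hrank (-p + 1) (-q + 1) (by omega)
      simpa only [show (-(-q + 1) : ℤ) = q - 1 by ring] using h
    have e3 : ((Finset.Icc (-N) N).filter fun i => w i ≤ -q).card
        = ((Finset.Icc (-N) N).filter fun m => m ≤ -q).card := by
      apply Finset.card_bij' (fun i _ => w i) (fun m _ => w⁻¹ m)
      · intro a ha
        simp only [Finset.mem_filter, Finset.mem_Icc] at ha ⊢
        exact ⟨⟨(hb a ha.1.1 ha.1.2).1, (hb a ha.1.1 ha.1.2).2⟩, ha.2⟩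
      · intro m hm
        simp only [Finset.mem_filter, Finset.mem_Icc] at hm ⊢
        refine ⟨⟨(hb' m hm.1.1 hm.1.2).1, (hb' m hm.1.1 hm.1.2).2⟩, ?_⟩
        rw [(Equiv.Perm.eq_inv_iff_eq (f := w) (x := w⁻¹ m) (y := m)).mp rfl]; exact hm.2
      · intro a _; simp
      · intro m _; simp
    have e4 : ((Finset.Icc (-N) N).filter fun m => m ≤ -q) = Finset.Icc (-N) (-q) := by
      ext x
      simp only [Finset.mem_filter, Finset.mem_Icc]
      omega
    have e5 : (((Finset.Icc (-N) N).filter fun m => m ≤ -q).card : ℤ) = N - q + 1 := by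
      rw [e4, Int.card_Icc]
      omega
    have hsplit : Finset.Icc (-N) N = Finset.Icc (-N) (p - 1) ∪ Finset.Icc p N := by
      ext x
      simp only [Finset.mem_union, Finset.mem_Icc]
      omega
    have hdisj : Disjoint (Finset.Icc (-N) (p - 1)) (Finset.Icc p N) := by
      rw [Finset.disjoint_left]
      intro a ha hb2
      simp only [Finset.mem_Icc] at ha hb2
      omega
    have e6 : ((Finset.Icc (-N) N).filter fun i => w i ≤ -q).card
        = ((Finset.Icc (-N) (p - 1)).filter fun i => w i ≤ -q).card
          + ((Finset.Icc p N).filter fun i => w i ≤ -q).card := by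
      rw [hsplit, Finset.filter_union,
        Finset.card_union_of_disjoint (Finset.disjoint_filter_filter hdisj)]
    have e7 : ((Finset.Icc (-N) (p - 1)).filter fun i => w i ≤ -q).card
        + ((Finset.Icc (-N) (p - 1)).filter fun i => ¬ (w i ≤ -q)).card
        = (Finset.Icc (-N) (p - 1)).card :=
      Finset.card_filter_add_card_filter_not _
    have e8 : ((Finset.Icc (-N) (p - 1)).card : ℤ) = N + p := by
      rw [Int.card_Icc]
      omega
    have e9 : ((Finset.Icc (-N) (p - 1)).filter fun i => ¬ (w i ≤ -q))
        = ((Finset.Icc (-p + 1) N).filter fun i => w i ≤ q - 1).image (fun i => -i) := by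
      ext x
      simp only [Finset.mem_image, Finset.mem_filter, Finset.mem_Icc]
      constructor
      · rintro ⟨⟨hh1, hh2⟩, hh3⟩
        push_neg at hh3
        have hh4 := Int.lt_iff_add_one_le.mp hh3
        refine ⟨-x, ⟨⟨by linarith, by linarith⟩, ?_⟩, by ring⟩
        rw [hsp x]
        linarith
      · rintro ⟨a, ⟨⟨hh1, hh2⟩, hh3⟩, rfl⟩
        refine ⟨⟨by linarith, by linarith⟩, ?_⟩
        rw [hsp a]
        intro hcon
        linarith
    have e9' : ((Finset.Icc (-p + 1) N).filter fun i => w i ≤ q - 1).card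
        = ((Finset.Icc (-N) (p - 1)).filter fun i => ¬ (w i ≤ -q)).card := by
      rw [e9, Finset.card_image_of_injective _ neg_injective]
    rw [e1, e2, e9']
    omega
end

section
/- Let w be a signed permutation that avoids the three signed patterns [-1,3,2], [-2,3,1], and [-3,2,1]. Then there do not exist corner positions (p,q) and (p',q') of w with p' > p ≥ 1 and q > 0 > q'. -/
/-- Key lemma: a positive triple `a < b < c` with `w a < 0 < w c < w b` forces
one of the three patterns. -/
lemma key_pattern (w : Equiv.Perm ℤ) (a b c : ℤ)
    (ha : 1 ≤ a) (hab : a < b) (hbc : b < c)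
    (hwa : w a < 0) (hwc : 0 < w c) (hcb : w c < w b)
    (hne1 : -(w a) ≠ w b) (hne2 : -(w a) ≠ w c) :
    ContainsPattern w [-1, 3, 2] ∨ ContainsPattern w [-2, 3, 1] ∨
      ContainsPattern w [-3, 2, 1] := by
  have hwb : 0 < w b := hwc.trans hcb
  have haa : |w a| = -(w a) := abs_of_neg hwa
  have hbb : |w b| = w b := abs_of_pos hwb
  have hcc : |w c| = w c := abs_of_pos hwc
  rcases lt_trichotomy (-(w a)) (w c) with hA | hA | hA
  · left
    refine ⟨![a, b, c], ?_, ?_, ?_, ?_⟩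
    · intro j; fin_cases j <;> simp <;> omega
    · intro j l h; fin_cases j <;> fin_cases l <;> simp_all <;> omega
    · intro j; fin_cases j <;> simp <;> omega
    · intro j l; fin_cases j <;> fin_cases l <;>
        simp [haa, hbb, hcc] <;> omega
  · exact absurd hA hne2
  · rcases lt_trichotomy (-(w a)) (w b) with hB | hB | hB
    · right; left
      refine ⟨![a, b, c], ?_, ?_, ?_, ?_⟩
      · intro j; fin_cases j <;> simp <;> omega
      · intro j l h; fin_cases j <;> fin_cases l <;> simp_all <;> omega
      · intro j; fin_cases j <;> simp <;> omega
      · intro j l; fin_cases j <;> fin_cases l <;>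
          simp [haa, hbb, hcc] <;> omega
    · exact absurd hB hne1
    · right; right
      refine ⟨![a, b, c], ?_, ?_, ?_, ?_⟩
      · intro j; fin_cases j <;> simp <;> omega
      · intro j l h; fin_cases j <;> fin_cases l <;> simp_all <;> omega
      · intro j; fin_cases j <;> simp <;> omega
      · intro j l; fin_cases j <;> fin_cases l <;>
          simp [haa, hbb, hcc] <;> omega

/-- If a signed permutation avoids `[-1,3,2]`, `[-2,3,1]`
and `[-3,2,1]`, then there are no corner positions `(p, q)` and `(p', q')`
with `p' > p ≥ 1` and `q > 0 > q'`. -/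
theorem no_corner_pair_A_B
    (w : Equiv.Perm ℤ) (hsp : IsSignedPerm w) (hW : ∃ n : ℕ, MemW w n)
    (h1 : AvoidsPattern w [-1, 3, 2])
    (h2 : AvoidsPattern w [-2, 3, 1])
    (h3 : AvoidsPattern w [-3, 2, 1]) :
    ¬ ∃ p q p' q' : ℤ, IsCornerPos w p q ∧ IsCornerPos w p' q' ∧
        1 ≤ p ∧ p < p' ∧ 0 < q ∧ q' < 0 := by
  rintro ⟨p, q, p', q', ⟨hp1, ⟨hwp1, hwp2⟩, ⟨hi1, hi2⟩, -⟩,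
    ⟨hp'1, ⟨hwp'1, hwp'2⟩, ⟨hi'1, hi'2⟩, -⟩, hp, hpp', hq, hq'⟩
  -- positions
  set c : ℤ := -(w⁻¹ q') with hc
  -- value facts
  have hwpneg : w p ≤ -q := by
    have := hsp p
    omega
  have hwb : 1 - q' ≤ w (p' - 1) := by
    have h := hsp (p' - 1)
    have : -(p' - 1) = -p' + 1 := by ring
    rw [this] at h
    omega
  have hwcval : w c = -q' := by
    have h1 : w (w⁻¹ q') = q' := Equiv.apply_symm_apply w q'
    have h2 := hsp (w⁻¹ q')
    rw [hc]
    omega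
  have hcge : p' ≤ c := by rw [hc]; omega
  -- p ≠ p' - 1
  have hab : p < p' - 1 := by
    rcases lt_or_eq_of_le (by omega : p ≤ p' - 1) with h | h
    · exact h
    · exfalso; rw [h] at hwpneg; omega
  -- distinct absolute values
  have hne1 : -(w p) ≠ w (p' - 1) := by
    intro h
    have : w (-p) = w (p' - 1) := by rw [hsp p, h]
    have := w.injective this
    omega
  have hne2 : -(w p) ≠ w c := by
    intro h
    have : w (-p) = w c := by rw [hsp p, h]
    have := w.injective this
    omega
  have := key_pattern w p (p' - 1) c hp (by omega) (by omega)
    (by omega) (by omega) (by omega) hne1 hne2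
  rcases this with h | h | h
  exacts [h1 h, h2 h, h3 h]
end

section
/- Let w be a signed permutation that avoids the thirteen signed patterns [-1,3,2], [-2,3,1], [-3,2,1], [-3,2,-1], [2,1,4,3], [2,-3,4,-1], [-2,-3,4,-1], [3,-4,1,-2], [3,-4,-1,-2], [-3,-4,1,-2], [-3,-4,-1,-2], [-4,1,-2,3], [-4,-1,-2,3], and suppose (p,q) and (p',q') are corner positions of w with p' > p ≥ 1 and 0 > q > q'. Then (p,q) is an unessential corner position of w, i.e., (p,q) ∈ U(w). -/
/-! ### Auxiliary lemmas for Statement 16 -/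

theorem Equiv.Perm.apply_inv_self {α : Type*} (f : Equiv.Perm α) (x : α) : f (f⁻¹ x) = x :=
  f.apply_symm_apply x

theorem Equiv.Perm.inv_apply_self {α : Type*} (f : Equiv.Perm α) (x : α) : f⁻¹ (f x) = x :=
  f.symm_apply_apply x

section UnessAux

variable (w : Equiv.Perm ℤ)

/- Pattern containment constructors. -/

theorem unessB_c2143 (i1 i2 i3 i4 : ℤ)
    (ho1 : 1 ≤ i1) (ho2 : i1 < i2) (ho3 : i2 < i3) (ho4 : i3 < i4)
    (hs2 : 0 < w i2) (hr1 : w i2 < w i1) (hr2 : w i1 < w i4) (hr3 : w i4 < w i3) :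
    ContainsPattern w [2, 1, 4, 3] := by
  have a1 : |w i1| = w i1 := abs_of_pos (by omega)
  have a2 : |w i2| = w i2 := abs_of_pos hs2
  have a3 : |w i3| = w i3 := abs_of_pos (by omega)
  have a4 : |w i4| = w i4 := abs_of_pos (by omega)
  refine ⟨![i1, i2, i3, i4], ?_, ?_, ?_, ?_⟩
  · intro j; fin_cases j <;> simp [List.get] <;> omega
  · intro j l h; fin_cases j <;> fin_cases l <;> simp_all <;> omega
  · intro j; fin_cases j <;> simp [List.get] <;> omega
  · intro j l; fin_cases j <;> fin_cases l <;> simp [List.get, a1, a2, a3, a4] <;> omega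

theorem unessB_cm132 (i1 i2 i3 : ℤ)
    (ho1 : 1 ≤ i1) (ho2 : i1 < i2) (ho3 : i2 < i3)
    (hs1 : w i1 < 0) (hs3 : 0 < w i3)
    (hr1 : -(w i1) < w i3) (hr2 : w i3 < w i2) :
    ContainsPattern w [-1, 3, 2] := by
  have a1 : |w i1| = -(w i1) := abs_of_neg hs1
  have a2 : |w i2| = w i2 := abs_of_pos (by omega)
  have a3 : |w i3| = w i3 := abs_of_pos hs3
  refine ⟨![i1, i2, i3], ?_, ?_, ?_, ?_⟩
  · intro j; fin_cases j <;> simp [List.get] <;> omega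
  · intro j l h; fin_cases j <;> fin_cases l <;> simp_all <;> omega
  · intro j; fin_cases j <;> simp [List.get] <;> omega
  · intro j l; fin_cases j <;> fin_cases l <;> simp [List.get, a1, a2, a3] <;> omega

theorem unessB_cm231 (i1 i2 i3 : ℤ)
    (ho1 : 1 ≤ i1) (ho2 : i1 < i2) (ho3 : i2 < i3)
    (hs1 : w i1 < 0) (hs3 : 0 < w i3)
    (hr1 : w i3 < -(w i1)) (hr2 : -(w i1) < w i2) :
    ContainsPattern w [-2, 3, 1] := by
  have a1 : |w i1| = -(w i1) := abs_of_neg hs1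
  have a2 : |w i2| = w i2 := abs_of_pos (by omega)
  have a3 : |w i3| = w i3 := abs_of_pos hs3
  refine ⟨![i1, i2, i3], ?_, ?_, ?_, ?_⟩
  · intro j; fin_cases j <;> simp [List.get] <;> omega
  · intro j l h; fin_cases j <;> fin_cases l <;> simp_all <;> omega
  · intro j; fin_cases j <;> simp [List.get] <;> omega
  · intro j l; fin_cases j <;> fin_cases l <;> simp [List.get, a1, a2, a3] <;> omega

theorem unessB_cm321 (i1 i2 i3 : ℤ)
    (ho1 : 1 ≤ i1) (ho2 : i1 < i2) (ho3 : i2 < i3)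
    (hs1 : w i1 < 0) (hs3 : 0 < w i3)
    (hr1 : w i3 < w i2) (hr2 : w i2 < -(w i1)) :
    ContainsPattern w [-3, 2, 1] := by
  have a1 : |w i1| = -(w i1) := abs_of_neg hs1
  have a2 : |w i2| = w i2 := abs_of_pos (by omega)
  have a3 : |w i3| = w i3 := abs_of_pos hs3
  refine ⟨![i1, i2, i3], ?_, ?_, ?_, ?_⟩
  · intro j; fin_cases j <;> simp [List.get] <;> omega
  · intro j l h; fin_cases j <;> fin_cases l <;> simp_all <;> omega
  · intro j; fin_cases j <;> simp [List.get] <;> omega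
  · intro j l; fin_cases j <;> fin_cases l <;> simp [List.get, a1, a2, a3] <;> omega

theorem unessB_cm32m1 (i1 i2 i3 : ℤ)
    (ho1 : 1 ≤ i1) (ho2 : i1 < i2) (ho3 : i2 < i3)
    (hs1 : w i1 < 0) (hs2 : 0 < w i2) (hs3 : w i3 < 0)
    (hr1 : -(w i3) < w i2) (hr2 : w i2 < -(w i1)) :
    ContainsPattern w [-3, 2, -1] := by
  have a1 : |w i1| = -(w i1) := abs_of_neg hs1
  have a2 : |w i2| = w i2 := abs_of_pos hs2
  have a3 : |w i3| = -(w i3) := abs_of_neg hs3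
  refine ⟨![i1, i2, i3], ?_, ?_, ?_, ?_⟩
  · intro j; fin_cases j <;> simp [List.get] <;> omega
  · intro j l h; fin_cases j <;> fin_cases l <;> simp_all <;> omega
  · intro j; fin_cases j <;> simp [List.get] <;> omega
  · intro j l; fin_cases j <;> fin_cases l <;> simp [List.get, a1, a2, a3] <;> omega

theorem unessB_c2m34m1 (i1 i2 i3 i4 : ℤ)
    (ho1 : 1 ≤ i1) (ho2 : i1 < i2) (ho3 : i2 < i3) (ho4 : i3 < i4)
    (hs1 : 0 < w i1) (hs2 : w i2 < 0) (hs4 : w i4 < 0)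
    (hr1 : -(w i4) < w i1) (hr2 : w i1 < -(w i2)) (hr3 : -(w i2) < w i3) :
    ContainsPattern w [2, -3, 4, -1] := by
  have a1 : |w i1| = w i1 := abs_of_pos hs1
  have a2 : |w i2| = -(w i2) := abs_of_neg hs2
  have a3 : |w i3| = w i3 := abs_of_pos (by omega)
  have a4 : |w i4| = -(w i4) := abs_of_neg hs4
  refine ⟨![i1, i2, i3, i4], ?_, ?_, ?_, ?_⟩
  · intro j; fin_cases j <;> simp [List.get] <;> omega
  · intro j l h; fin_cases j <;> fin_cases l <;> simp_all <;> omega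
  · intro j; fin_cases j <;> simp [List.get] <;> omega
  · intro j l; fin_cases j <;> fin_cases l <;> simp [List.get, a1, a2, a3, a4] <;> omega

theorem unessB_c3m41m2 (i1 i2 i3 i4 : ℤ)
    (ho1 : 1 ≤ i1) (ho2 : i1 < i2) (ho3 : i2 < i3) (ho4 : i3 < i4)
    (hs1 : 0 < w i1) (hs2 : w i2 < 0) (hs3 : 0 < w i3) (hs4 : w i4 < 0)
    (hr1 : w i3 < -(w i4)) (hr2 : -(w i4) < w i1) (hr3 : w i1 < -(w i2)) :
    ContainsPattern w [3, -4, 1, -2] := by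
  have a1 : |w i1| = w i1 := abs_of_pos hs1
  have a2 : |w i2| = -(w i2) := abs_of_neg hs2
  have a3 : |w i3| = w i3 := abs_of_pos hs3
  have a4 : |w i4| = -(w i4) := abs_of_neg hs4
  refine ⟨![i1, i2, i3, i4], ?_, ?_, ?_, ?_⟩
  · intro j; fin_cases j <;> simp [List.get] <;> omega
  · intro j l h; fin_cases j <;> fin_cases l <;> simp_all <;> omega
  · intro j; fin_cases j <;> simp [List.get] <;> omega
  · intro j l; fin_cases j <;> fin_cases l <;> simp [List.get, a1, a2, a3, a4] <;> omega

theorem unessB_c3m4m1m2 (i1 i2 i3 i4 : ℤ)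
    (ho1 : 1 ≤ i1) (ho2 : i1 < i2) (ho3 : i2 < i3) (ho4 : i3 < i4)
    (hs1 : 0 < w i1) (hs2 : w i2 < 0) (hs3 : w i3 < 0) (hs4 : w i4 < 0)
    (hr1 : -(w i3) < -(w i4)) (hr2 : -(w i4) < w i1) (hr3 : w i1 < -(w i2)) :
    ContainsPattern w [3, -4, -1, -2] := by
  have a1 : |w i1| = w i1 := abs_of_pos hs1
  have a2 : |w i2| = -(w i2) := abs_of_neg hs2
  have a3 : |w i3| = -(w i3) := abs_of_neg hs3
  have a4 : |w i4| = -(w i4) := abs_of_neg hs4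
  refine ⟨![i1, i2, i3, i4], ?_, ?_, ?_, ?_⟩
  · intro j; fin_cases j <;> simp [List.get] <;> omega
  · intro j l h; fin_cases j <;> fin_cases l <;> simp_all <;> omega
  · intro j; fin_cases j <;> simp [List.get] <;> omega
  · intro j l; fin_cases j <;> fin_cases l <;> simp [List.get, a1, a2, a3, a4] <;> omega

theorem unessB_cm41m23 (i1 i2 i3 i4 : ℤ)
    (ho1 : 1 ≤ i1) (ho2 : i1 < i2) (ho3 : i2 < i3) (ho4 : i3 < i4)
    (hs1 : w i1 < 0) (hs2 : 0 < w i2) (hs3 : w i3 < 0) (hs4 : 0 < w i4)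
    (hr1 : w i2 < -(w i3)) (hr2 : -(w i3) < w i4) (hr3 : w i4 < -(w i1)) :
    ContainsPattern w [-4, 1, -2, 3] := by
  have a1 : |w i1| = -(w i1) := abs_of_neg hs1
  have a2 : |w i2| = w i2 := abs_of_pos hs2
  have a3 : |w i3| = -(w i3) := abs_of_neg hs3
  have a4 : |w i4| = w i4 := abs_of_pos hs4
  refine ⟨![i1, i2, i3, i4], ?_, ?_, ?_, ?_⟩
  · intro j; fin_cases j <;> simp [List.get] <;> omega
  · intro j l h; fin_cases j <;> fin_cases l <;> simp_all <;> omega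
  · intro j; fin_cases j <;> simp [List.get] <;> omega
  · intro j l; fin_cases j <;> fin_cases l <;> simp [List.get, a1, a2, a3, a4] <;> omega

theorem unessB_cm4m1m23 (i1 i2 i3 i4 : ℤ)
    (ho1 : 1 ≤ i1) (ho2 : i1 < i2) (ho3 : i2 < i3) (ho4 : i3 < i4)
    (hs1 : w i1 < 0) (hs2 : w i2 < 0) (hs3 : w i3 < 0) (hs4 : 0 < w i4)
    (hr1 : -(w i2) < -(w i3)) (hr2 : -(w i3) < w i4) (hr3 : w i4 < -(w i1)) :
    ContainsPattern w [-4, -1, -2, 3] := by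
  have a1 : |w i1| = -(w i1) := abs_of_neg hs1
  have a2 : |w i2| = -(w i2) := abs_of_neg hs2
  have a3 : |w i3| = -(w i3) := abs_of_neg hs3
  have a4 : |w i4| = w i4 := abs_of_pos hs4
  refine ⟨![i1, i2, i3, i4], ?_, ?_, ?_, ?_⟩
  · intro j; fin_cases j <;> simp [List.get] <;> omega
  · intro j l h; fin_cases j <;> fin_cases l <;> simp_all <;> omega
  · intro j; fin_cases j <;> simp [List.get] <;> omega
  · intro j l; fin_cases j <;> fin_cases l <;> simp [List.get, a1, a2, a3, a4] <;> omega

/- Signed permutation helpers. -/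

theorem unessB_w0 (hsp : IsSignedPerm w) : w 0 = 0 := by
  have h := hsp 0; rw [neg_zero] at h; omega

theorem unessB_inv_neg (hsp : IsSignedPerm w) (x : ℤ) : w⁻¹ (-x) = -(w⁻¹ x) := by
  have h : w (-(w⁻¹ x)) = -x := by rw [hsp (w⁻¹ x), Equiv.Perm.apply_inv_self]
  rw [← h, Equiv.Perm.inv_apply_self]

theorem unessB_neg_facts (hsp : IsSignedPerm w) {a b : ℤ}
    (h : IsCornerPos w a b) (hb : b < 0) :
    2 ≤ a ∧ w a ≤ -b ∧ -b + 1 ≤ w (a - 1) ∧ a ≤ w⁻¹ (-b) ∧ w⁻¹ (-b + 1) ≤ a - 1 := by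
  obtain ⟨h1, ⟨h2, h3⟩, ⟨h4, h5⟩, h6⟩ := h
  have e1 : w (-a) = -(w a) := hsp a
  have e2 := hsp (a - 1); rw [show -(a - 1) = -a + 1 by ring] at e2
  have e3 := unessB_inv_neg w hsp (-b + 1)
  rw [show (-(-b + 1) : ℤ) = b - 1 by ring] at e3
  have e4 := unessB_inv_neg w hsp (-b); rw [neg_neg] at e4
  exact ⟨by omega, by omega, by omega, by omega, by omega⟩

theorem unessB_neg_mk (hsp : IsSignedPerm w) {a Q : ℤ} (ha : 2 ≤ a) (hQ : 1 ≤ Q)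
    (h1 : w a ≤ Q) (h2 : Q + 1 ≤ w (a - 1)) (h3 : a ≤ w⁻¹ Q) (h4 : w⁻¹ (Q + 1) ≤ a - 1) :
    IsCornerPos w a (-Q) := by
  have e1 : w (-a) = -(w a) := hsp a
  have e2 := hsp (a - 1); rw [show -(a - 1) = -a + 1 by ring] at e2
  have e3 := unessB_inv_neg w hsp Q
  have e4 := unessB_inv_neg w hsp (Q + 1)
  rw [show (-(Q + 1) : ℤ) = -Q - 1 by ring] at e4
  exact ⟨by omega, ⟨by omega, by omega⟩, ⟨by omega, by omega⟩, by omega⟩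

theorem unessB_pos_facts (hsp : IsSignedPerm w) {A B : ℤ}
    (h : IsCornerPos w A B) (hB : 0 < B) :
    1 ≤ A ∧ w A ≤ -B ∧ 1 - B ≤ w (A - 1) ∧ A ≤ w⁻¹ (-B) := by
  obtain ⟨h1, ⟨h2, h3⟩, ⟨h4, h5⟩, h6⟩ := h
  have e1 : w (-A) = -(w A) := hsp A
  have e2 := hsp (A - 1); rw [show -(A - 1) = -A + 1 by ring] at e2
  have e4 := unessB_inv_neg w hsp (-B); rw [neg_neg] at e4
  exact ⟨h1, by omega, by omega, by omega⟩

theorem unessB_posQ_mk (hsp : IsSignedPerm w) {P Q : ℤ} (hP : 1 ≤ P) (hQ : 1 ≤ Q)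
    (h1 : w P ≤ -(Q + 1)) (h2 : -Q ≤ w (P - 1)) (h3 : -P < w⁻¹ Q)
    (h4 : P ≤ w⁻¹ (-(Q + 1))) :
    IsCornerPos w P (Q + 1) := by
  have e1 : w (-P) = -(w P) := hsp P
  have e2 := hsp (P - 1); rw [show -(P - 1) = -P + 1 by ring] at e2
  have e3 : w⁻¹ (Q + 1 - 1) = w⁻¹ Q := by norm_num
  have e4 := unessB_inv_neg w hsp (Q + 1)
  exact ⟨hP, ⟨by omega, by omega⟩, ⟨by omega, by omega⟩, by omega⟩

theorem unessB_b_ne0 (hsp : IsSignedPerm w) {A B : ℤ} (h : IsCornerPos w A B) : B ≠ 0 := by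
  intro h0
  have h1 : 1 ≤ A := h.1
  have h2 : w⁻¹ B ≤ -A := h.2.2.1.2
  have h3 : w⁻¹ (0 : ℤ) = 0 :=
    w.injective (by rw [Equiv.Perm.apply_inv_self, unessB_w0 w hsp])
  rw [h0, h3] at h2; omega

theorem unessB_lb (hsp : IsSignedPerm w) {n : ℕ} (hn : MemW w n) {a b : ℤ}
    (h : IsCornerPos w a b) : -(n : ℤ) ≤ b := by
  by_contra hcon
  push_neg at hcon
  have h1 : w (-b) = -b := hn (-b) (by omega)
  have h2 : w b = b := by
    have h' := hsp (-b); rw [neg_neg, h1] at h'; omega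
  have h3 : w⁻¹ b = b := w.injective (by rw [Equiv.Perm.apply_inv_self, h2])
  have h1' : w (-(b - 1)) = -(b - 1) := hn (-(b - 1)) (by omega)
  have h2' : w (b - 1) = b - 1 := by
    have h' := hsp (-(b - 1)); rw [neg_neg, h1'] at h'; omega
  have h3' : w⁻¹ (b - 1) = b - 1 := w.injective (by rw [Equiv.Perm.apply_inv_self, h2'])
  obtain ⟨ha1, -, ⟨h4, h5⟩, -⟩ := h
  rw [h3'] at h4; rw [h3] at h5
  omega

/- L1: a negative value followed by a positive descent forces a 3-pattern. -/
theorem unessB_L1 (hsp : IsSignedPerm w)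
    (havoid : ∀ π ∈ thetaPatterns, AvoidsPattern w π) (i j k : ℤ)
    (h1 : 1 ≤ i) (hij : i < j) (hjk : j < k)
    (hi : w i < 0) (hk : 0 < w k) (hkj : w k < w j) (hik : -(w i) ≠ w k) : False := by
  have hij' : -(w i) ≠ w j := by
    intro h
    have h2 : w (-i) = w j := by rw [hsp i]; omega
    have := w.injective h2; omega
  rcases lt_trichotomy (-(w i)) (w k) with h | h | h
  · exact havoid [-1, 3, 2] (by simp [thetaPatterns])
      (unessB_cm132 w i j k h1 hij hjk hi hk h hkj)
  · exact hik h
  · rcases lt_trichotomy (-(w i)) (w j) with h2 | h2 | h2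
    · exact havoid [-2, 3, 1] (by simp [thetaPatterns])
        (unessB_cm231 w i j k h1 hij hjk hi hk h h2)
    · exact hij' h2
    · exact havoid [-3, 2, 1] (by simp [thetaPatterns])
        (unessB_cm321 w i j k h1 hij hjk hi hk hkj h2)

/- Core lemma: a position `x` west of a corner `(a,b)` carrying a value in
`(-b, -B]` is impossible when a corner `(A,B)` lies strictly southwest. -/
theorem unessB_core (hsp : IsSignedPerm w)
    (havoid : ∀ π ∈ thetaPatterns, AvoidsPattern w π) {a b A B x : ℤ}
    (hca : IsCornerPos w a b) (hcA : IsCornerPos w A B)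
    (hb : b < 0) (hBb : B < b) (haA : a < A)
    (hx1 : 1 ≤ x) (hxa : x ≤ a - 1) (hgl : -b < w x) (hgu : w x ≤ -B) : False := by
  obtain ⟨ha2, hwa, -, hua, -⟩ := unessB_neg_facts w hsp hca hb
  obtain ⟨hA2, -, hwA1, hUA, -⟩ := unessB_neg_facts w hsp hcA (by omega)
  have hwu : w (w⁻¹ (-b)) = -b := Equiv.Perm.apply_inv_self w (-b)
  have hwU : w (w⁻¹ (-B)) = -B := Equiv.Perm.apply_inv_self w (-B)
  have hgB : w x ≠ -B := by
    intro h
    have hxU : x = w⁻¹ (-B) := by rw [← h, Equiv.Perm.inv_apply_self]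
    omega
  have hxu : x < w⁻¹ (-b) := by omega
  rcases (by omega : w⁻¹ (-b) ≤ A - 2 ∨ w⁻¹ (-b) = A - 1 ∨ A ≤ w⁻¹ (-b)) with h | h | h
  · exact havoid [2, 1, 4, 3] (by simp [thetaPatterns])
      (unessB_c2143 w x (w⁻¹ (-b)) (A - 1) (w⁻¹ (-B)) hx1 hxu (by omega) (by omega)
        (by omega) (by omega) (by omega) (by omega))
  · have hbad : w (A - 1) = -b := by rw [← h]; exact hwu
    omega
  · have hwa' : w a ≠ -b := by
      intro h'
      have : a = w⁻¹ (-b) := by rw [← h', Equiv.Perm.inv_apply_self]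
      omega
    rcases lt_trichotomy (w a) 0 with hneg | h0 | hpos
    · have haA1 : a < A - 1 := by
        have hne : a ≠ A - 1 := by intro h'; rw [← h'] at hwA1; omega
        omega
      refine unessB_L1 w hsp havoid a (A - 1) (w⁻¹ (-B)) (by omega : (1:ℤ) ≤ a) haA1
        (by omega : A - 1 < w⁻¹ (-B)) hneg (by omega) (by omega) ?_
      intro h'
      have hwaB : w a = B := by omega
      have h2 : a = w⁻¹ B := by rw [← hwaB, Equiv.Perm.inv_apply_self]
      have e := unessB_inv_neg w hsp (-B); rw [neg_neg] at e
      omega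
    · have ha0 : a = 0 := w.injective (by rw [h0, unessB_w0 w hsp])
      omega
    · have haA1 : a ≠ A - 1 := by intro h'; rw [← h'] at hwA1; omega
      exact havoid [2, 1, 4, 3] (by simp [thetaPatterns])
        (unessB_c2143 w x a (A - 1) (w⁻¹ (-B)) hx1 (by omega : x < a) (by omega : a < A - 1)
          (by omega : A - 1 < w⁻¹ (-B)) hpos (by omega) (by omega) (by omega))

end UnessAux

/-- If a signed permutation avoids the thirteen patterns and
`(p, q)`, `(p', q')` are corner positions with `p' > p ≥ 1` and `0 > q > q'`,
then `(p, q)` is an unessential corner position. -/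
theorem unessential_of_corner_pair_B_B
    (w : Equiv.Perm ℤ) (hsp : IsSignedPerm w) (hW : ∃ n : ℕ, MemW w n)
    (havoid : ∀ π ∈ thetaPatterns, AvoidsPattern w π)
    (p q p' q' : ℤ) (hc : IsCornerPos w p q) (hc' : IsCornerPos w p' q')
    (hp : 1 ≤ p) (hpp : p < p') (hq0 : q < 0) (hqq : q' < q) :
    IsUnessential w p q := by
  classical
  obtain ⟨n, hn⟩ := hW
  have hw0 := unessB_w0 w hsp
  have hinv := unessB_inv_neg w hsp
  obtain ⟨hp2, hwp, hwp1, hup, hup1⟩ := unessB_neg_facts w hsp hc hq0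
  -- the least second coordinate among corners strictly southwest of (p, q)
  have hbdd : ∃ bd : ℤ, ∀ z : ℤ, (z < q ∧ ∃ A, p < A ∧ IsCornerPos w A z) → bd ≤ z :=
    ⟨-(n : ℤ), fun z hz => by
      obtain ⟨-, A, -, hcA⟩ := hz; exact unessB_lb w hsp hn hcA⟩
  obtain ⟨b₀, hb₀P, hb₀min⟩ :=
    Int.exists_least_of_bdd hbdd ⟨q', hqq, p', hpp, hc'⟩
  obtain ⟨hb₀q, a₀, hpa₀, hca₀⟩ := hb₀P
  have hb₀0 : b₀ < 0 := by omega
  obtain ⟨ha₀2, hwa₀, hwa₀1, hua₀, -⟩ := unessB_neg_facts w hsp hca₀ hb₀0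
  -- Claim 1: w (p-1) > -b₀
  have hclaim1 : -b₀ + 1 ≤ w (p - 1) := by
    by_contra hcon
    exact unessB_core w hsp havoid (x := p - 1) hc hca₀ hq0 hb₀q hpa₀ (by omega) (by omega)
      (by omega) (by omega)
  -- the greatest admissible V
  have hVbdd : ∃ bd : ℤ, ∀ z : ℤ,
      (-b₀ ≤ z ∧ z ≤ w (p - 1) - 1 ∧ p ≤ w⁻¹ z) → z ≤ bd :=
    ⟨w (p - 1) - 1, fun z hz => hz.2.1⟩
  obtain ⟨V, ⟨hV1, hV2, hV3⟩, hVmax⟩ :=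
    Int.exists_greatest_of_bdd hVbdd ⟨-b₀, le_refl _, by omega, by omega⟩
  have hq1corner : IsCornerPos w p (-V) := by
    refine unessB_neg_mk w hsp hp2 (by omega) (by omega) (by omega) hV3 ?_
    rcases (by omega : V + 1 ≤ w (p - 1) - 1 ∨ V + 1 = w (p - 1)) with h | h
    · by_contra hcon
      have := hVmax (V + 1) ⟨by omega, h, by omega⟩
      omega
    · have : w⁻¹ (V + 1) = p - 1 := by rw [h, Equiv.Perm.inv_apply_self]
      omega
  have hq1lt : -V < q := by omega
  have hNe1 : InNePath w p (-V) := by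
    refine ⟨hq1corner, fun a' b' hcab h => ?_⟩
    obtain ⟨h1, h2⟩ := h
    have := hb₀min b' ⟨by omega, a', h1, hcab⟩
    omega
  have hNe3 : InNePath w a₀ b₀ := by
    refine ⟨hca₀, fun a' b' hcab h => ?_⟩
    obtain ⟨h1, h2⟩ := h
    have := hb₀min b' ⟨by omega, a', by omega, hcab⟩
    omega
  -- the value q - 1 sits at a positive position
  have hcbar : 1 ≤ w⁻¹ (q - 1) := by
    rcases (by omega : 1 ≤ w⁻¹ (q - 1) ∨ w⁻¹ (q - 1) = 0 ∨ w⁻¹ (q - 1) ≤ -1) with h | h | h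
    · exact h
    · exfalso
      have e := Equiv.Perm.apply_inv_self w (q - 1)
      rw [h, hw0] at e; omega
    · exfalso
      have hwt : w (-(w⁻¹ (q - 1))) = -q + 1 := by
        have h2 := hsp (w⁻¹ (q - 1))
        rw [Equiv.Perm.apply_inv_self] at h2; omega
      have hcq1 : -p < w⁻¹ (q - 1) := hc.2.2.1.1
      exact unessB_core w hsp havoid (x := -(w⁻¹ (q - 1))) hc hc' hq0 hqq hpp (by omega) (by omega)
        (by omega) (by omega)
  -- P₂ : the least position with value ≤ q - 1
  have hp2bdd : ∃ bd : ℤ, ∀ z : ℤ, (1 ≤ z ∧ w z ≤ q - 1) → bd ≤ z :=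
    ⟨1, fun z hz => hz.1⟩
  have hwcbar : w (w⁻¹ (q - 1)) = q - 1 := Equiv.Perm.apply_inv_self w (q - 1)
  obtain ⟨P₂, ⟨hP₂1, hwP₂⟩, hP₂min⟩ :=
    Int.exists_least_of_bdd hp2bdd ⟨w⁻¹ (q - 1), hcbar, by omega⟩
  have hP₂c : P₂ ≤ w⁻¹ (q - 1) := hP₂min _ ⟨hcbar, by omega⟩
  have hwP₂1 : q ≤ w (P₂ - 1) := by
    rcases (by omega : P₂ = 1 ∨ 2 ≤ P₂) with h | h
    · have e : P₂ - 1 = 0 := by omega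
      rw [e, hw0]; omega
    · by_contra hcon
      have := hP₂min (P₂ - 1) ⟨by omega, by omega⟩
      omega
  have hcP₂ : IsCornerPos w P₂ (-q + 1) := by
    refine unessB_posQ_mk w hsp hP₂1 (by omega) (by omega) (by omega) (by omega) ?_
    rw [show (-(-q + 1) : ℤ) = q - 1 by ring]
    exact hP₂c
  have hwu : w (w⁻¹ (-q)) = -q := Equiv.Perm.apply_inv_self w (-q)
  have hNe2 : InNePath w P₂ (-q + 1) := by
    refine ⟨hcP₂, fun A B hcAB hAB => ?_⟩
    obtain ⟨hA, hB⟩ := hAB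
    have hB0 : B ≠ 0 := unessB_b_ne0 w hsp hcAB
    rcases hB0.lt_or_gt with hBneg | hBpos
    · -- competing corner with negative second coordinate
      obtain ⟨hA2, -, hwA1, hUA, -⟩ := unessB_neg_facts w hsp hcAB hBneg
      have hwUB : w (w⁻¹ (-B)) = -B := Equiv.Perm.apply_inv_self w (-B)
      have hA1P₂ : P₂ < A - 1 := by
        have hne : A - 1 ≠ P₂ := by intro h; rw [h] at hwA1; omega
        omega
      refine unessB_L1 w hsp havoid P₂ (A - 1) (w⁻¹ (-B)) (by omega) hA1P₂
        (by omega) (by omega) (by omega) (by omega) ?_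
      intro h
      have hwPB : w P₂ = B := by omega
      have h2 : P₂ = w⁻¹ B := by rw [← hwPB, Equiv.Perm.inv_apply_self]
      have e := hinv (-B); rw [neg_neg] at e
      omega
    · -- competing corner with positive second coordinate
      obtain ⟨-, hwA, hwA1, hMA⟩ := unessB_pos_facts w hsp hcAB hBpos
      have hwM : w (w⁻¹ (-B)) = -B := Equiv.Perm.apply_inv_self w (-B)
      have hBq : B ≤ -q - 1 := by
        have hBne : B ≠ -q := by
          intro h
          have e : w⁻¹ (-B) = w⁻¹ q := by rw [show -B = q by omega]
          have h2 : w⁻¹ q ≤ -p := hc.2.2.1.2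
          omega
        omega
      have hA1P₂ : P₂ < A - 1 := by
        have hne : A - 1 ≠ P₂ := by intro h; rw [h] at hwA1; omega
        omega
      have hgB : w (A - 1) ≠ B := by
        intro h
        have h2 : A - 1 = w⁻¹ B := by rw [← h, Equiv.Perm.inv_apply_self]
        have e := hinv (-B); rw [neg_neg] at e
        omega
      have hgmB : w (A - 1) ≠ -B := by
        intro h
        have h2 : A - 1 = w⁻¹ (-B) := by rw [← h, Equiv.Perm.inv_apply_self]
        omega
      have hgE : w (A - 1) ≠ -(w P₂) := by
        intro h
        have h2 : w (A - 1) = w (-P₂) := by rw [hsp P₂]; omega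
        have := w.injective h2; omega
      have hg0 : w (A - 1) ≠ 0 := by
        intro h
        have h2 : A - 1 = 0 := w.injective (by rw [h, hw0])
        omega
      have huP₂ : w⁻¹ (-q) ≠ P₂ := by
        intro h; rw [h] at hwu; omega
      have huM : w⁻¹ (-q) ≠ w⁻¹ (-B) := by
        intro h; rw [h] at hwu; omega
      rcases (by omega : w⁻¹ (-q) < P₂ ∨ (P₂ < w⁻¹ (-q) ∧ w⁻¹ (-q) < w⁻¹ (-B)) ∨
          w⁻¹ (-B) < w⁻¹ (-q)) with hu | ⟨hu1, hu2⟩ | hu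
      · rcases (by omega : w (A - 1) < 0 ∨ (0 < w (A - 1) ∧ w (A - 1) < B) ∨
            (B < w (A - 1) ∧ w (A - 1) < -(w P₂)) ∨ -(w P₂) < w (A - 1))
          with hg | ⟨hg1, hg2⟩ | ⟨hg1, hg2⟩ | hg
        · exact havoid [3, -4, -1, -2] (by simp [thetaPatterns])
            (unessB_c3m4m1m2 w (w⁻¹ (-q)) P₂ (A - 1) (w⁻¹ (-B)) (by omega) hu hA1P₂
              (by omega) (by omega) (by omega) hg (by omega) (by omega) (by omega)
              (by omega))
        · exact havoid [3, -4, 1, -2] (by simp [thetaPatterns])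
            (unessB_c3m41m2 w (w⁻¹ (-q)) P₂ (A - 1) (w⁻¹ (-B)) (by omega) hu hA1P₂
              (by omega) (by omega) (by omega) hg1 (by omega) (by omega) (by omega)
              (by omega))
        · exact havoid [-3, 2, -1] (by simp [thetaPatterns])
            (unessB_cm32m1 w P₂ (A - 1) (w⁻¹ (-B)) (by omega) hA1P₂ (by omega)
              (by omega) (by omega) (by omega) (by omega) (by omega))
        · exact havoid [2, -3, 4, -1] (by simp [thetaPatterns])
            (unessB_c2m34m1 w (w⁻¹ (-q)) P₂ (A - 1) (w⁻¹ (-B)) (by omega) hu hA1P₂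
              (by omega) (by omega) (by omega) (by omega) (by omega) (by omega)
              (by omega))
      · exact havoid [-3, 2, -1] (by simp [thetaPatterns])
          (unessB_cm32m1 w P₂ (w⁻¹ (-q)) (w⁻¹ (-B)) (by omega) hu1 hu2 (by omega)
            (by omega) (by omega) (by omega) (by omega))
      · rcases (by omega : w (A - 1) < 0 ∨ (0 < w (A - 1) ∧ w (A - 1) < B) ∨
            (B < w (A - 1) ∧ w (A - 1) < -(w P₂)) ∨ -(w P₂) < w (A - 1))
          with hg | ⟨hg1, hg2⟩ | ⟨hg1, hg2⟩ | hg
        · exact havoid [-4, -1, -2, 3] (by simp [thetaPatterns])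
            (unessB_cm4m1m23 w P₂ (A - 1) (w⁻¹ (-B)) (w⁻¹ (-q)) hP₂1 hA1P₂
              (by omega) hu (by omega) hg (by omega) (by omega) (by omega)
              (by omega) (by omega))
        · exact havoid [-4, 1, -2, 3] (by simp [thetaPatterns])
            (unessB_cm41m23 w P₂ (A - 1) (w⁻¹ (-B)) (w⁻¹ (-q)) hP₂1 hA1P₂
              (by omega) hu (by omega) hg1 (by omega) (by omega) (by omega)
              (by omega) (by omega))
        · exact havoid [-3, 2, -1] (by simp [thetaPatterns])
            (unessB_cm32m1 w P₂ (A - 1) (w⁻¹ (-B)) (by omega) hA1P₂ (by omega)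
              (by omega) (by omega) (by omega) (by omega) (by omega))
        · exact havoid [-2, 3, 1] (by simp [thetaPatterns])
            (unessB_cm231 w P₂ (A - 1) (w⁻¹ (-q)) (by omega) hA1P₂ (by omega)
              (by omega) (by omega) (by omega) (by omega))
  exact ⟨hc, p, -V, P₂, -q + 1, a₀, b₀, hNe1, hNe2, hNe3, rfl, hq1lt, hq0,
    by omega, rfl, hpa₀, hb₀q⟩
end
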